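/- arXiv:0911.3073 — 5 statements merged into one kernel-verified Lean document; each statement's English description precedes it below -/
import Mathlib

section
/- Let (a, b, m) be a Markov triple and r = ‖b‖²/‖a‖². Then r is a positive integer, i.e. there exists n ∈ ℕ with r = n. -/
/-- The Euclidean norm of a vector in `ℝ^n`. -/
noncomputable def euclNorm {n : ℕ} (v : Fin n → ℝ) : ℝ :=
  Real.sqrt (∑ i, v i ^ 2)

/-!
Since `m mᵀ a = m b = r a` with `a ≠ 0`, the index `r` is an eigenvalue of the integer matrix
`m mᵀ`, hence a root of its monic integer characteristic polynomial: an algebraic integer. It is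
also rational, because `r a_i = (m b)_i` with `a_i` a nonzero integer, so it is an integer.
It is positive because `r ‖a‖² = ⟨a, m b⟩ = ⟨mᵀ a, b⟩ = ‖b‖² > 0`.
-/

open Matrix

theorem Matrix.isIntegral_of_map_mulVec_eq_smul {R K n : Type*} [CommRing R] [CommRing K]
    [IsDomain K] [Algebra R K] [Fintype n] [DecidableEq n] (A : Matrix n n R) {v : n → K}
    (hv : v ≠ 0) {r : K} (hAv : A.map (algebraMap R K) *ᵥ v = r • v) : IsIntegral R r := by
  refine ⟨A.charpoly, A.charpoly_monic, ?_⟩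
  rw [← Polynomial.eval_map, ← charpoly_map, eval_charpoly, ← exists_mulVec_eq_zero_iff]
  exact ⟨v, hv, by simp [sub_mulVec, hAv, scalar_apply]⟩

theorem exists_intCast_eq_of_isIntegral_ratCast {K : Type*} [Field K] [CharZero K] {q : ℚ}
    (hq : IsIntegral ℤ (q : K)) : ∃ z : ℤ, (z : K) = q := by
  rw [← eq_ratCast (algebraMap ℚ K), isIntegral_algebraMap_iff (algebraMap ℚ K).injective,
    IsIntegrallyClosed.isIntegral_iff] at hq
  obtain ⟨z, hz⟩ := hq
  exact ⟨z, by simp [← hz]⟩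

section MarkovTriple

variable {R m n : Type*} [Fintype m] [Fintype n] {M : Matrix m n R} {a : m → R} {b : n → R} {r : R}

theorem Matrix.mul_dotProduct_self_eq_of_mulVec_eq_smul [CommSemiring R]
    (hb : Mᵀ *ᵥ a = b) (ha : M *ᵥ b = r • a) : r * (a ⬝ᵥ a) = b ⬝ᵥ b := by
  rw [← smul_eq_mul, ← dotProduct_smul, ← ha, dotProduct_mulVec, ← mulVec_transpose, hb]

theorem Matrix.pos_of_transpose_mulVec_eq_of_mulVec_eq_smul [CommRing R] [LinearOrder R]
    [IsStrictOrderedRing R] (hb : Mᵀ *ᵥ a = b) (ha : M *ᵥ b = r • a) (hb0 : b ≠ 0) : 0 < r := by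
  have hbb : 0 < b ⬝ᵥ b := (Finset.sum_nonneg fun j _ => mul_self_nonneg (b j)).lt_of_ne'
    (dotProduct_self_eq_zero.not.2 hb0)
  rw [← mul_dotProduct_self_eq_of_mulVec_eq_smul hb ha] at hbb
  exact pos_of_mul_pos_left hbb (Finset.sum_nonneg fun i _ => mul_self_nonneg (a i))

end MarkovTriple

theorem markov_index_integer_general (s t : ℕ) (hs : 0 < s) (ht : 0 < t)
    (a : Fin s → ℝ) (b : Fin t → ℝ) (m : Matrix (Fin s) (Fin t) ℝ)
    (ha : ∀ i, ∃ n : ℕ, 0 < n ∧ a i = n)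
    (hb : ∀ j, ∃ n : ℕ, 0 < n ∧ b j = n)
    (hm : ∀ i j, ∃ n : ℕ, m i j = n)
    (hta : m.transpose.mulVec a = b)
    (r : ℝ)
    (hmb : m.mulVec b = r • a) :
    ∃ n : ℕ, 0 < n ∧ r = n := by
  choose A hA0 hA using ha
  choose B hB0 hB using hb
  choose M hM using hm
  let mℤ : Matrix (Fin s) (Fin t) ℤ := Matrix.of fun i j => M i j
  have hmℤ : mℤ.map (algebraMap ℤ ℝ) = m := by ext; simp [mℤ, hM]
  let i₀ : Fin s := ⟨0, hs⟩
  have ha0 : a ≠ 0 := Function.ne_iff.2 ⟨i₀, by simp [hA, (hA0 i₀).ne']⟩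
  have hb0 : b ≠ 0 := Function.ne_iff.2 ⟨⟨0, ht⟩, by simp [hB, (hB0 _).ne']⟩
  have hint : IsIntegral ℤ r := (mℤ * mℤᵀ).isIntegral_of_map_mulVec_eq_smul ha0 <| by
    rw [Matrix.map_mul, transpose_map, hmℤ, ← mulVec_mulVec, hta, hmb]
  have hrat : r = ((∑ j, M i₀ j * B j : ℕ) / A i₀ : ℚ) := by
    have hri₀ := congrFun hmb i₀
    simp only [mulVec, dotProduct, hM, hB, hA, Pi.smul_apply, smul_eq_mul] at hri₀
    push_cast
    rw [eq_div_iff (by simp [(hA0 i₀).ne']), ← hri₀]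
  obtain ⟨z, hz⟩ := exists_intCast_eq_of_isIntegral_ratCast (hrat ▸ hint)
  rw [← hrat] at hz
  have hz0 : 0 < z := by
    exact_mod_cast hz ▸ pos_of_transpose_mulVec_eq_of_mulVec_eq_smul hta hmb hb0
  lift z to ℕ using hz0.le
  exact ⟨z, by exact_mod_cast hz0, by exact_mod_cast hz.symm⟩

/-- For a Markov triple `(a, b, m)` (i.e. `a`, `b` have strictly positive
integer entries, `m` has natural number entries, `mᵀ a = b` and `m b = r a` with
`r = ‖b‖²/‖a‖²`), the ratio `r` is a positive integer. -/
theorem markov_index_integer (s t : ℕ) (hs : 0 < s) (ht : 0 < t)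
    (a : Fin s → ℝ) (b : Fin t → ℝ) (m : Matrix (Fin s) (Fin t) ℝ)
    (ha : ∀ i, ∃ n : ℕ, 0 < n ∧ a i = n)
    (hb : ∀ j, ∃ n : ℕ, 0 < n ∧ b j = n)
    (hm : ∀ i j, ∃ n : ℕ, m i j = n)
    (hta : m.transpose.mulVec a = b)
    (r : ℝ) (hr : r = euclNorm b ^ 2 / euclNorm a ^ 2)
    (hmb : m.mulVec b = r • a) :
    ∃ n : ℕ, 0 < n ∧ r = n :=
  markov_index_integer_general s t hs ht a b m ha hb hm hta r hmb
end

section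
/- Let (a, b, m) be a Markov triple and r = ‖b‖²/‖a‖². Then the ℓ² operator norms satisfy ‖m‖ = ‖mᵀ‖ = √r. -/
/-- The ℓ² operator norm of a real matrix, i.e. the operator norm of the induced linear map
between Euclidean spaces. -/
noncomputable def opNorm {p q : ℕ} (m : Matrix (Fin p) (Fin q) ℝ) : ℝ :=
  ‖LinearMap.toContinuousLinearMap (Matrix.toEuclideanLin m)‖

lemma amgm_aux (xj xk vj vk : ℝ) (hj : 0 < vj) (hk : 0 < vk) :
    xj * xk ≤ (xj ^ 2 * vk / vj + xk ^ 2 * vj / vk) / 2 := by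
  rw [div_add_div _ _ hj.ne' hk.ne', div_div, le_div_iff₀ (by positivity)]
  nlinarith [sq_nonneg (xj * vk - xk * vj)]

lemma quad_bound {p q : ℕ} (M : Matrix (Fin p) (Fin q) ℝ) (hM : ∀ i j, 0 ≤ M i j)
    (v : Fin q → ℝ) (hv : ∀ j, 0 < v j) (r : ℝ)
    (hAv : ∀ j, ∑ k, (∑ i, M i j * M i k) * v k = r * v j)
    (x : Fin q → ℝ) : ∑ i, (∑ j, M i j * x j) ^ 2 ≤ r * ∑ j, x j ^ 2 := by
  have key : ∑ i, (∑ j, M i j * x j) ^ 2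
      = ∑ j, ∑ k, (∑ i, M i j * M i k) * (x j * x k) := by
    have e1 : ∀ i, (∑ j, M i j * x j) ^ 2
        = ∑ j, ∑ k, (M i j * M i k) * (x j * x k) := by
      intro i
      rw [sq, Finset.sum_mul_sum]
      exact Finset.sum_congr rfl fun j _ => Finset.sum_congr rfl fun k _ => by ring
    simp only [e1]
    rw [Finset.sum_comm]
    refine Finset.sum_congr rfl fun j _ => ?_
    rw [Finset.sum_comm]
    refine Finset.sum_congr rfl fun k _ => ?_
    rw [Finset.sum_mul]
  rw [key]
  have Asymm : ∀ j k, (∑ i, M i j * M i k) = ∑ i, M i k * M i j := by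
    intro j k; exact Finset.sum_congr rfl fun i _ => mul_comm _ _
  have half : ∀ j, ∑ k, (∑ i, M i j * M i k) * (x j ^ 2 * v k / v j) / 2
      = r * x j ^ 2 / 2 := by
    intro j
    have : ∀ k, (∑ i, M i j * M i k) * (x j ^ 2 * v k / v j) / 2
        = (x j ^ 2 / (2 * v j)) * ((∑ i, M i j * M i k) * v k) := by
      intro k
      field_simp
    simp only [this]
    rw [← Finset.mul_sum, hAv j]
    field_simp [(hv j).ne']
  calc ∑ j, ∑ k, (∑ i, M i j * M i k) * (x j * x k)
      ≤ ∑ j, ∑ k, (∑ i, M i j * M i k)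
          * ((x j ^ 2 * v k / v j + x k ^ 2 * v j / v k) / 2) := by
        refine Finset.sum_le_sum fun j _ => Finset.sum_le_sum fun k _ => ?_
        exact mul_le_mul_of_nonneg_left (amgm_aux _ _ _ _ (hv j) (hv k))
          (Finset.sum_nonneg fun i _ => mul_nonneg (hM i j) (hM i k))
    _ = (∑ j, ∑ k, (∑ i, M i j * M i k) * (x j ^ 2 * v k / v j) / 2)
          + ∑ j, ∑ k, (∑ i, M i j * M i k) * (x k ^ 2 * v j / v k) / 2 := by
        rw [← Finset.sum_add_distrib]
        refine Finset.sum_congr rfl fun j _ => ?_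
        rw [← Finset.sum_add_distrib]
        exact Finset.sum_congr rfl fun k _ => by ring
    _ = (∑ j, ∑ k, (∑ i, M i j * M i k) * (x j ^ 2 * v k / v j) / 2)
          + ∑ j, ∑ k, (∑ i, M i j * M i k) * (x j ^ 2 * v k / v j) / 2 := by
        congr 1
        rw [Finset.sum_comm]
        refine Finset.sum_congr rfl fun j _ => Finset.sum_congr rfl fun k _ => ?_
        rw [Asymm j k]
    _ = ∑ j, (r * x j ^ 2 / 2 + r * x j ^ 2 / 2) := by
        rw [← Finset.sum_add_distrib]
        exact Finset.sum_congr rfl fun j _ => by rw [half j]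
    _ = r * ∑ j, x j ^ 2 := by
        rw [Finset.mul_sum]
        exact Finset.sum_congr rfl fun j _ => by ring
  
lemma opNorm_eq_sqrt {p q : ℕ} (hq : 0 < q) (M : Matrix (Fin p) (Fin q) ℝ)
    (hM : ∀ i j, 0 ≤ M i j) (v : Fin q → ℝ) (hv : ∀ j, 0 < v j) (r : ℝ) (hr : 0 ≤ r)
    (hAv : ∀ j, ∑ k, (∑ i, M i j * M i k) * v k = r * v j)
    (hMv : ∑ i, (M.mulVec v) i ^ 2 = r * ∑ j, v j ^ 2) :
    opNorm M = Real.sqrt r := by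
  set f := LinearMap.toContinuousLinearMap (Matrix.toEuclideanLin M) with hf
  have fnorm : ∀ x : EuclideanSpace ℝ (Fin q),
      ‖f x‖ = Real.sqrt (∑ i, (M.mulVec (WithLp.equiv 2 (Fin q → ℝ) x)) i ^ 2) := by
    intro x
    rw [EuclideanSpace.norm_eq]
    congr 1
    refine Finset.sum_congr rfl fun i _ => ?_
    rw [Real.norm_eq_abs, sq_abs]
    rfl
  have xnorm : ∀ x : EuclideanSpace ℝ (Fin q),
      ‖x‖ = Real.sqrt (∑ j, (WithLp.equiv 2 (Fin q → ℝ) x) j ^ 2) := by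
    intro x
    rw [EuclideanSpace.norm_eq]
    congr 1
    refine Finset.sum_congr rfl fun j _ => ?_
    rw [Real.norm_eq_abs, sq_abs]
    rfl
  refine le_antisymm ?_ ?_
  · refine ContinuousLinearMap.opNorm_le_bound f (Real.sqrt_nonneg r) fun x => ?_
    rw [fnorm x, xnorm x, ← Real.sqrt_mul hr]
    refine Real.sqrt_le_sqrt ?_
    have := quad_bound M hM v hv r hAv (WithLp.equiv 2 (Fin q → ℝ) x)
    calc ∑ i, (M.mulVec (WithLp.equiv 2 (Fin q → ℝ) x)) i ^ 2
        = ∑ i, (∑ j, M i j * (WithLp.equiv 2 (Fin q → ℝ) x) j) ^ 2 := by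
          refine Finset.sum_congr rfl fun i _ => ?_
          simp [Matrix.mulVec, dotProduct]
      _ ≤ r * ((∑ j, (WithLp.equiv 2 (Fin q → ℝ) x) j ^ 2)) := this
  · set v' : EuclideanSpace ℝ (Fin q) := (WithLp.equiv 2 (Fin q → ℝ)).symm v with hv'
    have hvv : WithLp.equiv 2 (Fin q → ℝ) v' = v := rfl
    have h1 : ‖f v'‖ = Real.sqrt r * ‖v'‖ := by
      rw [fnorm v', xnorm v', hvv, hMv, Real.sqrt_mul hr]
    have h2 : 0 < ‖v'‖ := by
      rw [xnorm v', hvv]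
      refine Real.sqrt_pos.2 ?_
      refine Finset.sum_pos (fun j _ => by have := hv j; positivity) ?_
      exact Finset.univ_nonempty_iff.2 ⟨⟨0, hq⟩⟩
    have := f.le_opNorm v'
    rw [h1] at this
    exact le_of_mul_le_mul_right this h2

/-- For a Markov triple `(a, b, m)` with `r = ‖b‖²/‖a‖²`, the ℓ² operator
norms satisfy `‖m‖ = ‖mᵀ‖ = √r`. -/
theorem markov_opNorm (s t : ℕ) (hs : 0 < s) (ht : 0 < t)
    (a : Fin s → ℝ) (b : Fin t → ℝ) (m : Matrix (Fin s) (Fin t) ℝ)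
    (ha : ∀ i, ∃ n : ℕ, 0 < n ∧ a i = n)
    (hb : ∀ j, ∃ n : ℕ, 0 < n ∧ b j = n)
    (hm : ∀ i j, ∃ n : ℕ, m i j = n)
    (hta : m.transpose.mulVec a = b)
    (r : ℝ) (hr : r = euclNorm b ^ 2 / euclNorm a ^ 2)
    (hmb : m.mulVec b = r • a) :
    opNorm m = Real.sqrt r ∧ opNorm m.transpose = Real.sqrt r := by
  have hapos : ∀ i, 0 < a i := by
    intro i; obtain ⟨n, hn, h⟩ := ha i; rw [h]; exact_mod_cast hn
  have hbpos : ∀ j, 0 < b j := by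
    intro j; obtain ⟨n, hn, h⟩ := hb j; rw [h]; exact_mod_cast hn
  have hmnn : ∀ i j, 0 ≤ m i j := by
    intro i j; obtain ⟨n, h⟩ := hm i j; rw [h]; positivity
  have hSa : (0:ℝ) < ∑ i, a i ^ 2 := by
    refine Finset.sum_pos (fun i _ => by have := hapos i; positivity) ?_
    exact Finset.univ_nonempty_iff.2 ⟨⟨0, hs⟩⟩
  have hSb : (0:ℝ) < ∑ j, b j ^ 2 := by
    refine Finset.sum_pos (fun j _ => by have := hbpos j; positivity) ?_
    exact Finset.univ_nonempty_iff.2 ⟨⟨0, ht⟩⟩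
  have hea : euclNorm a ^ 2 = ∑ i, a i ^ 2 := by
    rw [euclNorm, Real.sq_sqrt hSa.le]
  have heb : euclNorm b ^ 2 = ∑ j, b j ^ 2 := by
    rw [euclNorm, Real.sq_sqrt hSb.le]
  have hr' : r * ∑ i, a i ^ 2 = ∑ j, b j ^ 2 := by
    rw [hr, hea, heb]; field_simp
  have hrpos : 0 < r := by
    rw [hr, hea, heb]; positivity
  -- eigen equation for mᵀ m and b
  have hAb : ∀ j, ∑ k, (∑ i, m i j * m i k) * b k = r * b j := by
    intro j
    have e : m.transpose.mulVec (m.mulVec b) = r • b := by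
      rw [hmb, Matrix.mulVec_smul, hta]
    have := congrFun e j
    calc ∑ k, (∑ i, m i j * m i k) * b k
        = (m.transpose.mulVec (m.mulVec b)) j := by
          simp only [Matrix.mulVec, dotProduct, Matrix.transpose_apply,
            Finset.sum_mul, Finset.mul_sum]
          rw [Finset.sum_comm]
          exact Finset.sum_congr rfl fun k _ => Finset.sum_congr rfl fun i _ => by ring
      _ = r * b j := by rw [this]; rfl
  -- eigen equation for m mᵀ and a
  have hAa : ∀ j, ∑ k, (∑ i, m.transpose i j * m.transpose i k) * a k = r * a j := by
    intro j
    have e : m.mulVec (m.transpose.mulVec a) = r • a := by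
      rw [hta, hmb]
    have := congrFun e j
    calc ∑ k, (∑ i, m.transpose i j * m.transpose i k) * a k
        = (m.mulVec (m.transpose.mulVec a)) j := by
          simp only [Matrix.mulVec, dotProduct, Matrix.transpose_apply,
            Finset.sum_mul, Finset.mul_sum]
          rw [Finset.sum_comm]
          exact Finset.sum_congr rfl fun k _ => Finset.sum_congr rfl fun i _ => by ring
      _ = r * a j := by rw [this]; rfl
  have hmv1 : ∑ i, (m.mulVec b) i ^ 2 = r * ∑ j, b j ^ 2 := by
    rw [hmb]
    have : ∑ i, (r • a) i ^ 2 = r ^ 2 * ∑ i, a i ^ 2 := by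
      rw [Finset.mul_sum]
      exact Finset.sum_congr rfl fun i _ => by simp [Pi.smul_apply, smul_eq_mul]; ring
    rw [this, sq, mul_assoc, hr']
  have hmv2 : ∑ j, (m.transpose.mulVec a) j ^ 2 = r * ∑ i, a i ^ 2 := by
    rw [hta, hr']
  constructor
  · exact opNorm_eq_sqrt ht m hmnn b hbpos r hrpos.le hAb hmv1
  · exact opNorm_eq_sqrt hs m.transpose (fun i j => hmnn j i) a hapos r hrpos.le hAa hmv2
end

section
/- Let (a, b, m) be a Markov triple and r = ‖b‖²/‖a‖². Then for every integer j ≥ 1, the ℓ² operator norms satisfy ‖(m mᵀ)^j‖ = r^j and ‖(mᵀ m)^j‖ = r^j. (This is the even-length case of the statement that any alternating product of m and mᵀ of length k has norm r^{k/2}.) -/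
open Matrix Finset

lemma opNorm_le_sqrt_of_sum_sq_le {p q : ℕ} (M : Matrix (Fin p) (Fin q) ℝ) {C : ℝ}
    (h : ∀ x, ∑ i, (M *ᵥ x) i ^ 2 ≤ C * ∑ k, x k ^ 2) : opNorm M ≤ √C := by
  refine ContinuousLinearMap.opNorm_le_bound _ (Real.sqrt_nonneg C) fun x => ?_
  simp only [LinearMap.coe_toContinuousLinearMap', EuclideanSpace.norm_eq, Real.norm_eq_abs,
    sq_abs]
  rw [← Real.sqrt_mul' C (sum_nonneg fun k _ => sq_nonneg _)]
  exact Real.sqrt_le_sqrt (h x.ofLp)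

lemma abs_le_opNorm_of_mulVec_eq_smul {p : ℕ} (M : Matrix (Fin p) (Fin p) ℝ) {v : Fin p → ℝ}
    {c : ℝ} (hv : v ≠ 0) (h : M *ᵥ v = c • v) : |c| ≤ opNorm M := by
  have hle := (LinearMap.toContinuousLinearMap (toEuclideanLin M)).le_opNorm (WithLp.toLp 2 v)
  rw [LinearMap.coe_toContinuousLinearMap', toLpLin_toLp, toLin'_apply, h, WithLp.toLp_smul,
    norm_smul, Real.norm_eq_abs] at hle
  exact le_of_mul_le_mul_right hle (by simpa using hv)

theorem sum_sq_mulVec_le_of_schur {p q : ℕ} {M : Matrix (Fin p) (Fin q) ℝ}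
    (hM : ∀ i k, 0 ≤ M i k) {u : Fin p → ℝ} {w : Fin q → ℝ} (hw : ∀ k, 0 < w k) {α β : ℝ}
    (hα : 0 ≤ α) (hMw : M *ᵥ w ≤ α • u) (huM : u ᵥ* M ≤ β • w) (x : Fin q → ℝ) :
    ∑ i, (M *ᵥ x) i ^ 2 ≤ α * β * ∑ k, x k ^ 2 := by
  set c : Fin q → ℝ := fun k => x k ^ 2 / w k
  have hc : 0 ≤ c := fun k => div_nonneg (sq_nonneg _) (hw k).le
  have hrow (i) : (M *ᵥ x) i ^ 2 ≤ (M *ᵥ w) i * (M *ᵥ c) i :=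
    sum_sq_le_sum_mul_sum_of_sq_le_mul (r := fun k => M i k * x k) univ
      (fun k _ => mul_nonneg (hM i k) (hw k).le) (fun k _ => mul_nonneg (hM i k) (hc k))
      fun k _ => le_of_eq <| by simp only [c]; field_simp [(hw k).ne']
  calc ∑ i, (M *ᵥ x) i ^ 2 ≤ ∑ i, α * u i * (M *ᵥ c) i := by
        gcongr with i
        exact (hrow i).trans (mul_le_mul_of_nonneg_right (hMw i)
          (dotProduct_nonneg_of_nonneg (fun k => hM i k) hc))
    _ = α * ((u ᵥ* M) ⬝ᵥ c) := by
        rw [← dotProduct_mulVec, dotProduct, mul_sum]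
        simp only [mul_assoc]
    _ ≤ α * ((β • w) ⬝ᵥ c) := by
        gcongr
        exact dotProduct_le_dotProduct_of_nonneg_right huM hc
    _ = α * β * ∑ k, x k ^ 2 := by
        simp only [dotProduct, c, Pi.smul_apply, smul_eq_mul, mul_sum]
        refine sum_congr rfl fun k _ => ?_
        field_simp [(hw k).ne']

theorem opNorm_eq_of_isSymm_of_mulVec_eq_smul {p : ℕ} (hp : 0 < p)
    {P : Matrix (Fin p) (Fin p) ℝ} (hsymm : P.IsSymm) (hP : ∀ i k, 0 ≤ P i k)
    {v : Fin p → ℝ} (hv : ∀ i, 0 < v i) {r : ℝ} (hr : 0 ≤ r) (hPv : P *ᵥ v = r • v) :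
    opNorm P = r := by
  refine le_antisymm ?_ ?_
  · have hvP : v ᵥ* P = r • v := by rw [← mulVec_transpose, hsymm.eq, hPv]
    calc opNorm P ≤ √(r * r) := opNorm_le_sqrt_of_sum_sq_le P
          (sum_sq_mulVec_le_of_schur hP hv hr hPv.le hvP.le)
      _ = r := Real.sqrt_mul_self hr
  · have hv0 : v ≠ 0 := fun h => (hv ⟨0, hp⟩).ne' (congrFun h _)
    simpa [abs_of_nonneg hr] using abs_le_opNorm_of_mulVec_eq_smul P hv0 hPv

lemma Matrix.mul_apply_nonneg {R ι κ ν : Type*} [Semiring R] [PartialOrder R] [IsOrderedRing R]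
    [Fintype κ] {A : Matrix ι κ R} {B : Matrix κ ν R}
    (hA : ∀ i k, 0 ≤ A i k) (hB : ∀ i k, 0 ≤ B i k) (i : ι) (k : ν) : 0 ≤ (A * B) i k :=
  sum_nonneg fun l _ => mul_nonneg (hA i l) (hB l k)

lemma Matrix.pow_mulVec_eq_smul {R ι : Type*} [CommSemiring R] [Fintype ι] [DecidableEq ι]
    {A : Matrix ι ι R} {v : ι → R} {c : R} (h : A *ᵥ v = c • v) (j : ℕ) :
    (A ^ j) *ᵥ v = c ^ j • v := by
  induction j with
  | zero => simp
  | succ j ih => rw [pow_succ', ← mulVec_mulVec, ih, mulVec_smul, h, smul_smul, pow_succ]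

theorem opNorm_pow_eq_of_isSymm_of_mulVec_eq_smul {p : ℕ} (hp : 0 < p)
    {P : Matrix (Fin p) (Fin p) ℝ} (hsymm : P.IsSymm) (hP : ∀ i k, 0 ≤ P i k)
    {v : Fin p → ℝ} (hv : ∀ i, 0 < v i) {r : ℝ} (hr : 0 ≤ r) (hPv : P *ᵥ v = r • v) (j : ℕ) :
    opNorm (P ^ j) = r ^ j :=
  opNorm_eq_of_isSymm_of_mulVec_eq_smul hp (hsymm.pow j) (pow_apply_nonneg hP j) hv
    (pow_nonneg hr j) (pow_mulVec_eq_smul hPv j)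

lemma Matrix.isSymm_mul_transpose {R ι κ : Type*} [CommSemiring R] [Fintype κ]
    (A : Matrix ι κ R) : (A * Aᵀ).IsSymm := by
  rw [IsSymm, transpose_mul, transpose_transpose]

/-- For a Markov triple `(a, b, m)` with `r = ‖b‖²/‖a‖²`, for every `j ≥ 1`
the ℓ² operator norms satisfy `‖(m mᵀ)^j‖ = r^j` and `‖(mᵀ m)^j‖ = r^j` (the even-length case
of: any alternating product of `m` and `mᵀ` of length `k` has norm `r^{k/2}`). -/
theorem markov_opNorm_alternating_even (s t : ℕ) (hs : 0 < s) (ht : 0 < t)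
    (a : Fin s → ℝ) (b : Fin t → ℝ) (m : Matrix (Fin s) (Fin t) ℝ)
    (ha : ∀ i, ∃ n : ℕ, 0 < n ∧ a i = n)
    (hb : ∀ j, ∃ n : ℕ, 0 < n ∧ b j = n)
    (hm : ∀ i j, ∃ n : ℕ, m i j = n)
    (hta : m.transpose.mulVec a = b)
    (r : ℝ) (hr : r = euclNorm b ^ 2 / euclNorm a ^ 2)
    (hmb : m.mulVec b = r • a) :
    ∀ j : ℕ, 1 ≤ j →
      opNorm ((m * m.transpose) ^ j) = r ^ j ∧
      opNorm ((m.transpose * m) ^ j) = r ^ j := by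
  intro j _
  have ha' (i) : 0 < a i := by obtain ⟨n, hn, e⟩ := ha i; rw [e]; exact_mod_cast hn
  have hb' (i) : 0 < b i := by obtain ⟨n, hn, e⟩ := hb i; rw [e]; exact_mod_cast hn
  have hm' (i k) : 0 ≤ m i k := by obtain ⟨n, e⟩ := hm i k; rw [e]; exact n.cast_nonneg
  have hmT (i k) : 0 ≤ mᵀ i k := hm' k i
  have hr0 : 0 ≤ r := hr ▸ by positivity
  have hmmT : (m * mᵀ) *ᵥ a = r • a := by rw [← mulVec_mulVec, hta, hmb]
  have hmTm : (mᵀ * m) *ᵥ b = r • b := by rw [← mulVec_mulVec, hmb, mulVec_smul, hta]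
  refine ⟨?_, ?_⟩
  · exact opNorm_pow_eq_of_isSymm_of_mulVec_eq_smul hs m.isSymm_mul_transpose
      (mul_apply_nonneg hm' hmT) ha' hr0 hmmT j
  · simpa using opNorm_pow_eq_of_isSymm_of_mulVec_eq_smul ht mᵀ.isSymm_mul_transpose
      (mul_apply_nonneg hmT hm') hb' hr0 (by simpa using hmTm) j
end

section
/- Let (a, b, m) be a Markov triple and r = ‖b‖²/‖a‖². Then for every integer j ≥ 0, the ℓ² operator norms satisfy ‖(m mᵀ)^j m‖ = r^j √r and ‖(mᵀ m)^j mᵀ‖ = r^j √r. (This is the odd-length case of the statement that any alternating product of m and mᵀ of length k has norm r^{k/2}.) -/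
lemma aux_sq_ineq {p q : ℕ} (A : Matrix (Fin p) (Fin q) ℝ) (u : Fin p → ℝ) (v : Fin q → ℝ)
    (hA : ∀ i j, 0 ≤ A i j) (hv : ∀ j, 0 < v j)
    {α β : ℝ}
    (hAv : A.mulVec v = α • u) (hAu : A.transpose.mulVec u = β • v)
    (x : Fin q → ℝ) :
    ∑ i, (A.mulVec x i) ^ 2 ≤ (α * β) * ∑ j, x j ^ 2 := by
  have step1 : ∀ i, (A.mulVec x i) ^ 2 ≤ (α * u i) * ∑ j, A i j * x j ^ 2 / v j := by
    intro i
    have h := Finset.sum_sq_le_sum_mul_sum_of_sq_eq_mul (s := Finset.univ)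
      (r := fun j => A i j * x j) (f := fun j => A i j * v j)
      (g := fun j => A i j * x j ^ 2 / v j)
      (fun j _ => mul_nonneg (hA i j) (hv j).le)
      (fun j _ => div_nonneg (mul_nonneg (hA i j) (sq_nonneg _)) (hv j).le)
      (fun j _ => by have := (hv j).ne'; field_simp)
    have hAvi : ∑ j, A i j * v j = α * u i := by
      have := congrFun hAv i
      simpa [Matrix.mulVec, dotProduct] using this
    calc (A.mulVec x i) ^ 2 = (∑ j, A i j * x j) ^ 2 := by
          simp [Matrix.mulVec, dotProduct]
      _ ≤ (∑ j, A i j * v j) * ∑ j, A i j * x j ^ 2 / v j := h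
      _ = (α * u i) * ∑ j, A i j * x j ^ 2 / v j := by rw [hAvi]
  have hAuj : ∀ j, ∑ i, A i j * u i = β * v j := by
    intro j
    have := congrFun hAu j
    simp only [Matrix.mulVec, dotProduct, Matrix.transpose_apply, Pi.smul_apply,
      smul_eq_mul] at this
    rw [← this]
  calc ∑ i, (A.mulVec x i) ^ 2 ≤ ∑ i, (α * u i) * ∑ j, A i j * x j ^ 2 / v j :=
        Finset.sum_le_sum fun i _ => step1 i
    _ = ∑ i, ∑ j, α * ((x j ^ 2 / v j) * (A i j * u i)) := by
        refine Finset.sum_congr rfl fun i _ => ?_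
        rw [Finset.mul_sum]
        refine Finset.sum_congr rfl fun j _ => ?_
        have := (hv j).ne'
        field_simp
    _ = ∑ j, α * ((x j ^ 2 / v j) * ∑ i, A i j * u i) := by
        rw [Finset.sum_comm]
        refine Finset.sum_congr rfl fun j _ => ?_
        rw [← Finset.mul_sum, ← Finset.mul_sum]
    _ = ∑ j, (α * β) * x j ^ 2 := by
        refine Finset.sum_congr rfl fun j _ => ?_
        rw [hAuj j]
        have := (hv j).ne'
        field_simp
    _ = (α * β) * ∑ j, x j ^ 2 := by rw [Finset.mul_sum]

lemma aux_norm_sq {p q : ℕ} (A : Matrix (Fin p) (Fin q) ℝ) (x : EuclideanSpace ℝ (Fin q)) :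
    ‖LinearMap.toContinuousLinearMap (Matrix.toEuclideanLin A) x‖ ^ 2 =
      ∑ i, (A.mulVec ((WithLp.equiv 2 (Fin q → ℝ)) x) i) ^ 2 := by
  rw [LinearMap.coe_toContinuousLinearMap', EuclideanSpace.norm_eq,
    Real.sq_sqrt (Finset.sum_nonneg fun i _ => sq_nonneg _)]
  refine Finset.sum_congr rfl fun i _ => ?_
  rw [Matrix.toEuclideanLin_apply]
  simp [sq_abs]

set_option maxHeartbeats 1000000 in
lemma aux_opNorm {p q : ℕ} (hq : 0 < q) (A : Matrix (Fin p) (Fin q) ℝ)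
    (u : Fin p → ℝ) (v : Fin q → ℝ)
    (hA : ∀ i j, 0 ≤ A i j) (hv : ∀ j, 0 < v j)
    {α β : ℝ} (hαβ : 0 ≤ α * β)
    (hAv : A.mulVec v = α • u) (hAu : A.transpose.mulVec u = β • v) :
    opNorm A = Real.sqrt (α * β) := by
  rw [opNorm]
  set T := LinearMap.toContinuousLinearMap (Matrix.toEuclideanLin A) with hT
  have hub : ∀ x : EuclideanSpace ℝ (Fin q), ‖T x‖ ≤ Real.sqrt (α * β) * ‖x‖ := by
    intro x
    have h1 : ‖T x‖ ^ 2 ≤ (α * β) * ‖x‖ ^ 2 := by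
      rw [aux_norm_sq, EuclideanSpace.norm_eq,
        Real.sq_sqrt (Finset.sum_nonneg fun i _ => sq_nonneg _)]
      calc ∑ i, (A.mulVec ((WithLp.equiv 2 (Fin q → ℝ)) x) i) ^ 2
          ≤ (α * β) * ∑ j, ((WithLp.equiv 2 (Fin q → ℝ)) x) j ^ 2 :=
            aux_sq_ineq A u v hA hv hAv hAu _
        _ = (α * β) * ∑ j, ‖x j‖ ^ 2 := by
            congr 1; exact Finset.sum_congr rfl fun j _ => by simp [sq_abs]
    calc ‖T x‖ = Real.sqrt (‖T x‖ ^ 2) := (Real.sqrt_sq (norm_nonneg _)).symm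
      _ ≤ Real.sqrt ((α * β) * ‖x‖ ^ 2) := Real.sqrt_le_sqrt h1
      _ = Real.sqrt (α * β) * ‖x‖ := by
          rw [Real.sqrt_mul hαβ, Real.sqrt_sq (norm_nonneg _)]
  -- the identity for lower bound
  have hid : ∑ i, (α * u i) ^ 2 = (α * β) * ∑ j, v j ^ 2 := by
    have h1 : ∑ i, u i * (A.mulVec v i) = ∑ j, (A.transpose.mulVec u j) * v j := by
      simp only [Matrix.mulVec, dotProduct, Matrix.transpose_apply,
        Finset.mul_sum, Finset.sum_mul]
      rw [Finset.sum_comm]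
      exact Finset.sum_congr rfl fun j _ => Finset.sum_congr rfl fun i _ => by ring
    rw [hAv, hAu] at h1
    simp only [Pi.smul_apply, smul_eq_mul] at h1
    calc ∑ i, (α * u i) ^ 2 = α * ∑ i, u i * (α * u i) := by
          rw [Finset.mul_sum]
          exact Finset.sum_congr rfl fun i _ => by ring
      _ = α * ∑ x, β * v x * v x := by rw [h1]
      _ = (α * β) * ∑ j, v j ^ 2 := by
          rw [Finset.mul_sum, Finset.mul_sum]
          exact Finset.sum_congr rfl fun j _ => by ring
  set x₀ : EuclideanSpace ℝ (Fin q) := (WithLp.equiv 2 (Fin q → ℝ)).symm v with hx₀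
  have hx₀norm : ‖x₀‖ = Real.sqrt (∑ j, v j ^ 2) := by
    rw [EuclideanSpace.norm_eq]
    congr 1
    exact Finset.sum_congr rfl fun j _ => by simp [hx₀, sq_abs]
  have hx₀pos : 0 < ‖x₀‖ := by
    rw [hx₀norm]
    apply Real.sqrt_pos.2
    have ⟨j⟩ : Nonempty (Fin q) := ⟨⟨0, hq⟩⟩
    exact Finset.sum_pos' (fun j _ => sq_nonneg _) ⟨j, Finset.mem_univ j, pow_pos (hv j) 2⟩
  have hTx₀ : ‖T x₀‖ = Real.sqrt (α * β) * ‖x₀‖ := by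
    have : ‖T x₀‖ ^ 2 = (α * β) * ‖x₀‖ ^ 2 := by
      rw [aux_norm_sq]
      have hv' : (WithLp.equiv 2 (Fin q → ℝ)) x₀ = v := by simp [hx₀]
      rw [hv', hAv, hx₀norm, Real.sq_sqrt (Finset.sum_nonneg fun j _ => sq_nonneg _)]
      simpa using hid
    have h3 : (Real.sqrt (α * β) * ‖x₀‖) ^ 2 = (α * β) * ‖x₀‖ ^ 2 := by
      rw [mul_pow, Real.sq_sqrt hαβ]
    rw [← Real.sqrt_sq (norm_nonneg (T x₀)), this, Real.sqrt_mul hαβ,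
      Real.sqrt_sq (norm_nonneg x₀)]
  refine le_antisymm ?_ ?_
  · exact T.opNorm_le_bound (Real.sqrt_nonneg _) hub
  · have := T.le_opNorm x₀
    rw [hTx₀] at this
    exact le_of_mul_le_mul_right this hx₀pos

lemma aux_mul_nonneg {p q w : ℕ} {M : Matrix (Fin p) (Fin q) ℝ} {N : Matrix (Fin q) (Fin w) ℝ}
    (hM : ∀ i j, 0 ≤ M i j) (hN : ∀ i j, 0 ≤ N i j) : ∀ i j, 0 ≤ (M * N) i j := fun i j => by
  rw [Matrix.mul_apply]
  exact Finset.sum_nonneg fun k _ => mul_nonneg (hM i k) (hN k j)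

lemma aux_pow_nonneg {p : ℕ} {M : Matrix (Fin p) (Fin p) ℝ} (hM : ∀ i j, 0 ≤ M i j) (k : ℕ) :
    ∀ i j, 0 ≤ (M ^ k) i j := by
  induction k with
  | zero => intro i j; rw [pow_zero, Matrix.one_apply]; split <;> norm_num
  | succ k ih => rw [pow_succ]; exact aux_mul_nonneg ih hM


/-- For a Markov triple `(a, b, m)` with `r = ‖b‖²/‖a‖²`, for every `j ≥ 0`
the ℓ² operator norms satisfy `‖(m mᵀ)^j m‖ = r^j √r` and `‖(mᵀ m)^j mᵀ‖ = r^j √r` (the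
odd-length case of: any alternating product of `m` and `mᵀ` of length `k` has norm `r^{k/2}`). -/
theorem markov_opNorm_alternating_odd (s t : ℕ) (hs : 0 < s) (ht : 0 < t)
    (a : Fin s → ℝ) (b : Fin t → ℝ) (m : Matrix (Fin s) (Fin t) ℝ)
    (ha : ∀ i, ∃ n : ℕ, 0 < n ∧ a i = n)
    (hb : ∀ j, ∃ n : ℕ, 0 < n ∧ b j = n)
    (hm : ∀ i j, ∃ n : ℕ, m i j = n)
    (hta : m.transpose.mulVec a = b)
    (r : ℝ) (hr : r = euclNorm b ^ 2 / euclNorm a ^ 2)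
    (hmb : m.mulVec b = r • a) :
    ∀ j : ℕ,
      opNorm ((m * m.transpose) ^ j * m) = r ^ j * Real.sqrt r ∧
      opNorm ((m.transpose * m) ^ j * m.transpose) = r ^ j * Real.sqrt r := by
  have hr0 : 0 ≤ r := hr ▸ div_nonneg (sq_nonneg _) (sq_nonneg _)
  have ha' : ∀ i, 0 < a i := fun i => by
    obtain ⟨n, hn, h⟩ := ha i; rw [h]; exact_mod_cast hn
  have hb' : ∀ j, 0 < b j := fun j => by
    obtain ⟨n, hn, h⟩ := hb j; rw [h]; exact_mod_cast hn
  have hm' : ∀ i j, 0 ≤ m i j := fun i j => by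
    obtain ⟨n, h⟩ := hm i j; rw [h]; positivity
  have hmT : ∀ i j, 0 ≤ m.transpose i j := fun i j => hm' j i
  have hSa : ∀ k : ℕ, ((m * m.transpose) ^ k).mulVec a = r ^ k • a := by
    intro k
    induction k with
    | zero => simp
    | succ k ih =>
      rw [pow_succ, ← Matrix.mulVec_mulVec, ← Matrix.mulVec_mulVec, hta, hmb,
        Matrix.mulVec_smul, ih, smul_smul]
      rw [show r * r ^ k = r ^ (k + 1) by ring]
  have hTb : ∀ k : ℕ, ((m.transpose * m) ^ k).mulVec b = r ^ k • b := by
    intro k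
    induction k with
    | zero => simp
    | succ k ih =>
      rw [pow_succ, ← Matrix.mulVec_mulVec, ← Matrix.mulVec_mulVec, hmb,
        Matrix.mulVec_smul, hta, Matrix.mulVec_smul, ih, smul_smul]
      rw [show r * r ^ k = r ^ (k + 1) by ring]
  have hST : (m * m.transpose).transpose = m * m.transpose := by
    rw [Matrix.transpose_mul, Matrix.transpose_transpose]
  have hTT : (m.transpose * m).transpose = m.transpose * m := by
    rw [Matrix.transpose_mul, Matrix.transpose_transpose]
  intro j
  have hsqrt : Real.sqrt (r ^ (j + 1) * r ^ j) = r ^ j * Real.sqrt r := by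
    rw [show r ^ (j + 1) * r ^ j = (r ^ j) ^ 2 * r by ring,
      Real.sqrt_mul (sq_nonneg _), Real.sqrt_sq (pow_nonneg hr0 j)]
  constructor
  · have h1 : ((m * m.transpose) ^ j * m).mulVec b = r ^ (j + 1) • a := by
      rw [← Matrix.mulVec_mulVec, hmb, Matrix.mulVec_smul, hSa j, smul_smul]
      rw [show r * r ^ j = r ^ (j + 1) by ring]
    have h2 : ((m * m.transpose) ^ j * m).transpose.mulVec a = r ^ j • b := by
      rw [Matrix.transpose_mul, Matrix.transpose_pow, hST, ← Matrix.mulVec_mulVec,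
        hSa j, Matrix.mulVec_smul, hta]
    have := aux_opNorm ht ((m * m.transpose) ^ j * m) a b
      (aux_mul_nonneg (aux_pow_nonneg (aux_mul_nonneg hm' hmT) j) hm') hb'
      (α := r ^ (j + 1)) (β := r ^ j) (by positivity) h1 h2
    rw [this, hsqrt]
  · have h1 : ((m.transpose * m) ^ j * m.transpose).mulVec a = r ^ j • b := by
      rw [← Matrix.mulVec_mulVec, hta, hTb j]
    have h2 : ((m.transpose * m) ^ j * m.transpose).transpose.mulVec b = r ^ (j + 1) • a := by
      rw [Matrix.transpose_mul, Matrix.transpose_pow, Matrix.transpose_transpose, hTT,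
        ← Matrix.mulVec_mulVec, hTb j, Matrix.mulVec_smul, hmb, smul_smul]
      rw [show r ^ j * r = r ^ (j + 1) by ring]
    have := aux_opNorm hs ((m.transpose * m) ^ j * m.transpose) b a
      (aux_mul_nonneg (aux_pow_nonneg (aux_mul_nonneg hmT hm') j) hmT) ha'
      (α := r ^ j) (β := r ^ (j + 1)) (by positivity) h1 h2
    rw [this, show r ^ j * r ^ (j + 1) = r ^ (j + 1) * r ^ j by ring, hsqrt]
end

section
/- For every k ≥ 0, the element e_k = γ^{-1} Σ μ_v(g) μ_v(h) ((p,h,h) ; (p,g,g)) of P_{k+2} — the sum being over all k-paths p with end vertex v and all pairs of edges g, h incident to v — is a self-adjoint idempotent: e_k² = e_k and e_k* = e_k, where * is the conjugate-linear involution determined by (f; e)* = (e; f). -/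
/-!
Send the basis loop `(f; e)` of `P_{k+2}` to the matrix unit `E_{e f}` indexed by `(k+2)`-paths:
loop multiplication becomes matrix multiplication and `*` the conjugate transpose. The matrix of
`e_k` is block diagonal, two paths lying in the same block when they share their first `k` edges
and their last two edges are attached at the same vertex `v`. On the block of a `k`-path `p` it is
`γ⁻¹ w wᵀ`, where `w` is `μ_v(g)` at `(p, g, g)` and vanishes elsewhere. Since `η` is a
`γ`-eigenvector, `∑_g μ_v(g)² = γ`, so every block is the orthogonal projection onto `w`.
-/

open scoped Classical

noncomputable section

variable {Γa Γb E : Type*}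

/-- The condition for `(base, p)` to be a `k`-path based in `Γa` in the bipartite graph with
source map `s : E → Γa` and target map `t : E → Γb`: the path starts at `base`, and the edges
are traversed alternately forwards and backwards, i.e. `t (p (2i-1)) = t (p (2i))` and
`s (p (2i)) = s (p (2i+1))` (with 1-based indexing). -/
def IsPath (s : E → Γa) (t : E → Γb) (k : ℕ) (base : Γa) (p : Fin k → E) : Prop :=
  (∀ h : 0 < k, s (p ⟨0, h⟩) = base) ∧
    ∀ (j : Fin k) (hj : (j : ℕ) + 1 < k),
      if Even (j : ℕ) then t (p j) = t (p ⟨(j : ℕ) + 1, hj⟩)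
      else s (p j) = s (p ⟨(j : ℕ) + 1, hj⟩)

/-- A `k`-path based in `Γa`: a base vertex together with an alternating edge sequence. -/
def GPath (s : E → Γa) (t : E → Γb) (k : ℕ) :=
  { bp : Γa × (Fin k → E) // IsPath s t k bp.1 bp.2 }

namespace GPath

variable {s : E → Γa} {t : E → Γb} {k : ℕ}

/-- The start vertex of a path. -/
def base (p : GPath s t k) : Γa := p.1.1

/-- The edge sequence of a path. -/
def edges (p : GPath s t k) : Fin k → E := p.1.2

/-- The end vertex of a path: the vertex reached after the `k` steps. -/
def endV (p : GPath s t k) : Γa ⊕ Γb :=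
  if h : 0 < k then
    if Even k then Sum.inl (s (p.edges ⟨k - 1, Nat.sub_lt h one_pos⟩))
    else Sum.inr (t (p.edges ⟨k - 1, Nat.sub_lt h one_pos⟩))
  else Sum.inl p.base

end GPath

/-- A `2k`-loop based in `Γa`, encoded as a pair `(f; e)` of `k`-paths with the same start
and the same end. -/
def Loop (s : E → Γa) (t : E → Γb) (k : ℕ) :=
  { fe : GPath s t k × GPath s t k // fe.1.base = fe.2.base ∧ fe.1.endV = fe.2.endV }

namespace Loop

variable {s : E → Γa} {t : E → Γb} {k : ℕ}

/-- The first path `f` of the loop `(f; e)`. -/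
def f (l : Loop s t k) : GPath s t k := l.1.1

/-- The second path `e` of the loop `(f; e)`. -/
def e (l : Loop s t k) : GPath s t k := l.1.2

end Loop

variable [Fintype Γa] [Fintype Γb] [Fintype E]

instance instFintypeGPath {s : E → Γa} {t : E → Γb} {k : ℕ} : Fintype (GPath s t k) :=
  Subtype.fintype _

instance instFintypeLoop {s : E → Γa} {t : E → Γb} {k : ℕ} : Fintype (Loop s t k) :=
  Subtype.fintype _

/-- The loop multiplication on `P_k = (Loop s t k → ℂ)`, determined on basis loops by
`(f; e) · (h; g) = δ_{f,g} (h; e)`. -/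
def lmul {s : E → Γa} {t : E → Γb} {k : ℕ} (x y : Loop s t k → ℂ) : Loop s t k → ℂ :=
  fun l => ∑ l₁ : Loop s t k, ∑ l₂ : Loop s t k,
    if l₁.f = l₂.e ∧ l₁.e = l.e ∧ l₂.f = l.f then x l₁ * y l₂ else 0

/-- The unit of `P_k`: the sum of `(p; p)` over all `k`-paths `p`. -/
def lone {s : E → Γa} {t : E → Γb} {k : ℕ} : Loop s t k → ℂ :=
  fun l => if l.f = l.e then 1 else 0

/-- `L` is obtained from the loop `l = (f; e)` by appending the same edge `g` to both `f`
and `e`. -/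
def ExtendsBy {s : E → Γa} {t : E → Γb} {k : ℕ} (l : Loop s t k) (L : Loop s t (k + 1)) :
    Prop :=
  ∃ g : E, L.f.1 = (l.f.base, Fin.snoc l.f.edges g) ∧ L.e.1 = (l.e.base, Fin.snoc l.e.edges g)

/-- The inclusion `I_k : P_k → P_{k+1}`, determined on basis loops by
`I_k (f; e) = ∑_g (f,g; e,g)`, the sum being over the edges `g` incident to the common end
vertex of `f` and `e`. -/
def incl {s : E → Γa} {t : E → Γb} {k : ℕ} (x : Loop s t k → ℂ) : Loop s t (k + 1) → ℂ :=
  fun L => ∑ l : Loop s t k, if ExtendsBy l L then x l else 0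


/-- `μ_v(g) = √(η(w)/η(v))`, where `w` is the endpoint of the edge `g` other than `v`. -/
def mu (s : E → Γa) (t : E → Γb) (η : Γa ⊕ Γb → ℝ) (v : Γa ⊕ Γb) (g : E) : ℝ :=
  match v with
  | Sum.inl va => Real.sqrt (η (Sum.inr (t g)) / η (Sum.inl va))
  | Sum.inr vb => Real.sqrt (η (Sum.inl (s g)) / η (Sum.inr vb))

/-- The vertex to which an edge appended at (0-based) position `k` of a path is attached:
a vertex of `Γa` if `k` is even, a vertex of `Γb` if `k` is odd. -/
def attachV (s : E → Γa) (t : E → Γb) (k : ℕ) (g : E) : Γa ⊕ Γb :=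
  if Even k then Sum.inl (s g) else Sum.inr (t g)

/-- The Jones projection element
`e_k = γ⁻¹ ∑ μ_v(g) μ_v(h) ((p,h,h); (p,g,g)) ∈ P_{k+2}`, the sum being over all `k`-paths
`p` with end vertex `v` and all pairs of edges `g, h` incident to `v`. -/
def jonesE (s : E → Γa) (t : E → Γb) (γ : ℝ) (η : Γa ⊕ Γb → ℝ) (k : ℕ) :
    Loop s t (k + 2) → ℂ :=
  fun L =>
    if (∀ i : Fin k, L.f.edges (Fin.castLE (by omega) i) = L.e.edges (Fin.castLE (by omega) i))
        ∧ L.f.edges ⟨k, by omega⟩ = L.f.edges ⟨k + 1, by omega⟩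
        ∧ L.e.edges ⟨k, by omega⟩ = L.e.edges ⟨k + 1, by omega⟩ then
      ((γ⁻¹ * mu s t η (attachV s t k (L.e.edges ⟨k, by omega⟩)) (L.e.edges ⟨k, by omega⟩)
          * mu s t η (attachV s t k (L.f.edges ⟨k, by omega⟩)) (L.f.edges ⟨k, by omega⟩) : ℝ)
        : ℂ)
    else 0

/-- The conjugate-linear involution `*` on `P_k`, determined by `(f; e)* = (e; f)`. -/
def starP {s : E → Γa} {t : E → Γb} {k : ℕ} (x : Loop s t k → ℂ) : Loop s t k → ℂ :=
  fun l => (starRingEnd ℂ) (x ⟨(l.e, l.f), l.2.1.symm, l.2.2.symm⟩)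

end

noncomputable section

namespace Matrix

variable {ι κ 𝕜 : Type*} [DecidableEq κ]

def blockOuter [Field 𝕜] (key : ι → κ) (c : 𝕜) (w : ι → 𝕜) : Matrix ι ι 𝕜 :=
  of fun i j => if key i = key j then c⁻¹ * w i * w j else 0

theorem blockOuter_mul_self [Fintype ι] [Field 𝕜] {key : ι → κ} {c : 𝕜} {w : ι → 𝕜}
    (hc : c ≠ 0) (hw : ∀ i, ∑ j ∈ Finset.univ.filter (fun j => key j = key i), w j ^ 2 = c) :
    blockOuter key c w * blockOuter key c w = blockOuter key c w := by
  ext i l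
  simp only [mul_apply, blockOuter, of_apply]
  by_cases hil : key i = key l
  · have hterm : ∀ j, (if key i = key j then c⁻¹ * w i * w j else 0) *
        (if key j = key l then c⁻¹ * w j * w l else 0) =
        if key j = key i then c⁻¹ * c⁻¹ * w i * w l * w j ^ 2 else 0 := by
      intro j
      by_cases hji : key j = key i
      · rw [if_pos hji.symm, if_pos (hji.trans hil), if_pos hji]; ring
      · rw [if_neg (Ne.symm hji), if_neg hji, zero_mul]
    rw [Finset.sum_congr rfl fun j _ => hterm j, ← Finset.sum_filter, ← Finset.mul_sum, hw i,
      if_pos hil]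
    field_simp
  · rw [if_neg hil]
    refine Finset.sum_eq_zero fun j _ => ?_
    by_cases hij : key i = key j
    · rw [if_neg fun hjl => hil (hij.trans hjl), mul_zero]
    · rw [if_neg hij, zero_mul]

theorem conjTranspose_blockOuter [Field 𝕜] [StarRing 𝕜] {key : ι → κ} {c : 𝕜} {w : ι → 𝕜}
    (hc : IsSelfAdjoint c) (hw : ∀ i, IsSelfAdjoint (w i)) :
    (blockOuter key c w)ᴴ = blockOuter key c w := by
  ext i j
  simp only [conjTranspose_apply, blockOuter, of_apply, eq_comm (a := key j)]
  split_ifs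
  · rw [star_mul', star_mul', star_inv₀, hc.star_eq, (hw i).star_eq, (hw j).star_eq]; ring
  · exact star_zero _

end Matrix

open scoped Matrix

variable {Γa Γb E : Type*} {s : E → Γa} {t : E → Γb} {k : ℕ}

theorem isPath_iff {base : Γa} {p : Fin k → E} :
    IsPath s t k base p ↔ (∀ h : 0 < k, s (p ⟨0, h⟩) = base) ∧
      ∀ (j : Fin k) (hj : (j : ℕ) + 1 < k),
        attachV s t (j + 1) (p j) = attachV s t (j + 1) (p ⟨j + 1, hj⟩) := by
  refine and_congr_right fun _ => forall₂_congr fun j _ => ?_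
  by_cases hj : Even (j : ℕ) <;> simp [attachV, hj, Nat.even_add_one]

namespace GPath

theorem isPath (p : GPath s t k) : IsPath s t k p.base p.edges := p.2

def Parallel (f e : GPath s t k) : Prop :=
  f.base = e.base ∧ f.endV = e.endV

theorem Parallel.symm {f e : GPath s t k} (h : f.Parallel e) : e.Parallel f :=
  ⟨h.1.symm, h.2.symm⟩

theorem Parallel.trans {f m e : GPath s t k} (h₁ : f.Parallel m) (h₂ : m.Parallel e) :
    f.Parallel e :=
  ⟨h₁.1.trans h₂.1, h₁.2.trans h₂.2⟩

def EndsWithBacktrack (p : GPath s t (k + 2)) : Prop :=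
  p.edges ⟨k, by omega⟩ = p.edges ⟨k + 1, by omega⟩

theorem endV_eq_attachV (p : GPath s t (k + 2)) :
    p.endV = attachV s t k (p.edges ⟨k + 1, by omega⟩) := by
  simp [endV, attachV, Nat.even_add]

theorem isPath_replaceLastTwo (p : GPath s t (k + 2)) {g : E}
    (hg : attachV s t k g = attachV s t k (p.edges ⟨k, by omega⟩)) :
    IsPath s t (k + 2) p.base fun i => if (i : ℕ) < k then p.edges i else g := by
  obtain ⟨hbase, hstep⟩ := isPath_iff.mp p.isPath
  refine isPath_iff.mpr ⟨fun h => ?_, fun ⟨j, hj⟩ hj1 => ?_⟩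
  · by_cases hk : 0 < k
    · simpa [hk] using hbase h
    · obtain rfl : k = 0 := by omega
      simpa [attachV, ← hbase h] using hg
  · rcases lt_trichotomy (j + 1) k with hjk | rfl | hjk
    · simpa [hjk, show j < k by omega] using hstep ⟨j, hj⟩ hj1
    · simpa [hg] using hstep ⟨j, hj⟩ hj1
    · simp [show ¬ j < k by omega, show ¬ j + 1 < k by omega]

def replaceLastTwo (p : GPath s t (k + 2)) {g : E}
    (hg : attachV s t k g = attachV s t k (p.edges ⟨k, by omega⟩)) : GPath s t (k + 2) :=
  ⟨(p.base, fun i => if (i : ℕ) < k then p.edges i else g), isPath_replaceLastTwo p hg⟩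

end GPath

def jonesKey (p : GPath s t (k + 2)) : Γa × (Fin k → E) × (Γa ⊕ Γb) :=
  (p.base, fun i => p.edges (Fin.castLE (by omega) i), attachV s t k (p.edges ⟨k, by omega⟩))

def jonesWeight (η : Γa ⊕ Γb → ℝ) (p : GPath s t (k + 2)) : ℝ :=
  if p.EndsWithBacktrack then
    mu s t η (attachV s t k (p.edges ⟨k, by omega⟩)) (p.edges ⟨k, by omega⟩)
  else 0

namespace GPath

variable (p : GPath s t (k + 2)) {g : E}
  (hg : attachV s t k g = attachV s t k (p.edges ⟨k, by omega⟩))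

theorem edges_replaceLastTwo_k : (p.replaceLastTwo hg).edges ⟨k, by omega⟩ = g := by
  simp [replaceLastTwo, edges]

theorem endsWithBacktrack_replaceLastTwo : (p.replaceLastTwo hg).EndsWithBacktrack := by
  simp [EndsWithBacktrack, replaceLastTwo, edges]

theorem jonesKey_replaceLastTwo : jonesKey (p.replaceLastTwo hg) = jonesKey p := by
  simp only [jonesKey, edges_replaceLastTwo_k, hg, Prod.mk.injEq, and_true]
  exact ⟨rfl, funext fun i => if_pos i.isLt⟩

theorem replaceLastTwo_eq_of_jonesKey_eq {q : GPath s t (k + 2)} (hkey : jonesKey q = jonesKey p)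
    (hq : q.EndsWithBacktrack) :
    p.replaceLastTwo (congrArg (·.2.2) hkey) = q := by
  simp only [jonesKey, Prod.mk.injEq, funext_iff] at hkey
  refine Subtype.ext (Prod.ext hkey.1.symm (funext fun ⟨i, hi⟩ => ?_))
  show (if i < k then p.edges ⟨i, hi⟩ else q.edges ⟨k, by omega⟩) = q.edges ⟨i, hi⟩
  by_cases hik : i < k
  · rw [if_pos hik]
    exact (hkey.2.1 ⟨i, hik⟩).symm
  · rw [if_neg hik]
    obtain rfl | rfl : i = k ∨ i = k + 1 := by omega
    exacts [rfl, hq]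

end GPath

section Eigenvector

variable [Fintype E] {γ : ℝ} {η : Γa ⊕ Γb → ℝ}

theorem sum_sq_mu_inl (hη : ∀ x, 0 < η x)
    (heig : ∀ va : Γa,
      (∑ g : E, if s g = va then η (Sum.inr (t g)) else 0) = γ * η (Sum.inl va))
    (va : Γa) :
    ∑ g ∈ Finset.univ.filter (fun g => s g = va), mu s t η (Sum.inl va) g ^ 2 = γ := by
  simp only [mu, Real.sq_sqrt (div_pos (hη _) (hη _)).le]
  rw [← Finset.sum_div, Finset.sum_filter, heig, mul_div_assoc, div_self (hη _).ne', mul_one]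

theorem sum_sq_mu_inr (hη : ∀ x, 0 < η x)
    (heig : ∀ vb : Γb,
      (∑ g : E, if t g = vb then η (Sum.inl (s g)) else 0) = γ * η (Sum.inr vb))
    (vb : Γb) :
    ∑ g ∈ Finset.univ.filter (fun g => t g = vb), mu s t η (Sum.inr vb) g ^ 2 = γ := by
  simp only [mu, Real.sq_sqrt (div_pos (hη _) (hη _)).le]
  rw [← Finset.sum_div, Finset.sum_filter, heig, mul_div_assoc, div_self (hη _).ne', mul_one]

theorem sum_sq_mu_attachV (hη : ∀ x, 0 < η x)
    (heig₁ : ∀ va : Γa,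
      (∑ g : E, if s g = va then η (Sum.inr (t g)) else 0) = γ * η (Sum.inl va))
    (heig₂ : ∀ vb : Γb,
      (∑ g : E, if t g = vb then η (Sum.inl (s g)) else 0) = γ * η (Sum.inr vb))
    (k : ℕ) (g₀ : E) :
    ∑ g ∈ Finset.univ.filter (fun g => attachV s t k g = attachV s t k g₀),
      mu s t η (attachV s t k g₀) g ^ 2 = γ := by
  by_cases hk : Even k
  · simpa [attachV, hk] using sum_sq_mu_inl hη heig₁ (s g₀)
  · simpa [attachV, hk] using sum_sq_mu_inr hη heig₂ (t g₀)

theorem sum_sq_jonesWeight [Fintype Γa] (hη : ∀ x, 0 < η x)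
    (heig₁ : ∀ va : Γa,
      (∑ g : E, if s g = va then η (Sum.inr (t g)) else 0) = γ * η (Sum.inl va))
    (heig₂ : ∀ vb : Γb,
      (∑ g : E, if t g = vb then η (Sum.inl (s g)) else 0) = γ * η (Sum.inr vb))
    (p : GPath s t (k + 2)) :
    ∑ q ∈ Finset.univ.filter (fun q : GPath s t (k + 2) => jonesKey q = jonesKey p),
      jonesWeight η q ^ 2 = γ := by
  set v := attachV s t k (p.edges ⟨k, by omega⟩)
  set block := Finset.univ.filter fun q : GPath s t (k + 2) => jonesKey q = jonesKey p
  have hv {q} (hq : q ∈ block) : attachV s t k (q.edges ⟨k, by omega⟩) = v :=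
    congrArg (·.2.2) (Finset.mem_filter.mp hq).2
  calc ∑ q ∈ block, jonesWeight η q ^ 2
      = ∑ q ∈ block.filter GPath.EndsWithBacktrack, mu s t η v (q.edges ⟨k, by omega⟩) ^ 2 := by
        rw [Finset.sum_filter (s := block)]
        refine Finset.sum_congr rfl fun q hq => ?_
        unfold jonesWeight
        split_ifs <;> simp [hv hq]
    _ = ∑ g ∈ Finset.univ.filter (fun g => attachV s t k g = v), mu s t η v g ^ 2 := by
        refine Finset.sum_bij' (fun q _ => q.edges ⟨k, by omega⟩)
          (fun g hg => p.replaceLastTwo (Finset.mem_filter.mp hg).2) (fun q hq => ?_)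
          (fun g hg => ?_) (fun q hq => ?_) (fun g hg => ?_) (fun _ _ => rfl)
        · exact Finset.mem_filter.mpr ⟨Finset.mem_univ _, hv (Finset.mem_filter.mp hq).1⟩
        · exact Finset.mem_filter.mpr ⟨Finset.mem_filter.mpr ⟨Finset.mem_univ _,
            p.jonesKey_replaceLastTwo _⟩, p.endsWithBacktrack_replaceLastTwo _⟩
        · obtain ⟨hq, hback⟩ := Finset.mem_filter.mp hq
          exact p.replaceLastTwo_eq_of_jonesKey_eq (Finset.mem_filter.mp hq).2 hback
        · exact p.edges_replaceLastTwo_k _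
    _ = γ := sum_sq_mu_attachV hη heig₁ heig₂ k _

end Eigenvector

namespace Loop

def ofPaths (f e : GPath s t k) (h : f.Parallel e) : Loop s t k :=
  ⟨(f, e), h⟩

@[simp]
theorem f_ofPaths (f e : GPath s t k) (h : f.Parallel e) :
    (ofPaths f e h).f = f :=
  rfl

@[simp]
theorem e_ofPaths (f e : GPath s t k) (h : f.Parallel e) :
    (ofPaths f e h).e = e :=
  rfl

/-- Rows are indexed by `e` and columns by `f`, so that `lmul` is matrix multiplication. -/
def toMatrix {R : Type*} [Zero R] (x : Loop s t k → R) : Matrix (GPath s t k) (GPath s t k) R :=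
  Matrix.of fun e f => if h : f.Parallel e then x (ofPaths f e h) else 0

variable {R : Type*}

theorem toMatrix_apply_e_f [Zero R] (x : Loop s t k → R) (l : Loop s t k) :
    toMatrix x l.e l.f = x l :=
  dif_pos l.2

theorem toMatrix_injective [Zero R] :
    Function.Injective (toMatrix : (Loop s t k → R) → Matrix (GPath s t k) (GPath s t k) R) :=
  fun x y h => funext fun l => by
    simpa only [toMatrix_apply_e_f] using congrFun (congrFun h l.e) l.f

theorem toMatrix_apply_of_not_parallel [Zero R] (x : Loop s t k → R)
    {e f : GPath s t k} (h : ¬ f.Parallel e) : toMatrix x e f = 0 :=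
  dif_neg h

theorem toMatrix_mul_left [MulZeroClass R] (φ : GPath s t k → GPath s t k → R)
    (x : Loop s t k → R) (e f : GPath s t k) :
    toMatrix (fun l => φ l.f l.e * x l) e f = φ f e * toMatrix x e f := by
  simp only [toMatrix, Matrix.of_apply]
  split_ifs <;> simp

theorem toMatrix_starP (x : Loop s t k → ℂ) : toMatrix (starP x) = (toMatrix x)ᴴ := by
  ext e f
  by_cases h : f.Parallel e
  · simp only [toMatrix, Matrix.conjTranspose_apply, Matrix.of_apply, dif_pos h, dif_pos h.symm]
    rfl
  · rw [Matrix.conjTranspose_apply, toMatrix_apply_of_not_parallel _ h,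
      toMatrix_apply_of_not_parallel _ fun h' => h h'.symm, star_zero]

variable [Fintype Γa] [Fintype E]

theorem sum_eq_sum_toMatrix [AddCommMonoid R] (x : Loop s t k → R) :
    ∑ l, x l = ∑ f, ∑ e, toMatrix x e f := by
  rw [← Fintype.sum_prod_type']
  simp only [toMatrix, Matrix.of_apply]
  rw [Finset.sum_dite, Finset.sum_const_zero, add_zero]
  refine Fintype.sum_equiv (Equiv.subtypeEquivRight fun p => ?_) _ _ fun _ => rfl
  rw [Finset.mem_filter]
  simp [GPath.Parallel]

theorem lmul_apply (x y : Loop s t k → ℂ) (l : Loop s t k) :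
    lmul x y l = (toMatrix x * toMatrix y) l.e l.f := by
  calc lmul x y l
      = ∑ l₁, ∑ l₂, (if l₁.f = l₂.e ∧ l₁.e = l.e ∧ l₂.f = l.f then x l₁ else 0) * y l₂ := by
        simp only [lmul, ite_mul, zero_mul]
    _ = ∑ l₁, ((if l₁.e = l.e then 1 else 0) * toMatrix y l₁.f l.f) * x l₁ := by
        refine Finset.sum_congr rfl fun l₁ _ => ?_
        rw [sum_eq_sum_toMatrix]
        simp only [toMatrix_mul_left
          (fun f e => if l₁.f = e ∧ l₁.e = l.e ∧ f = l.f then x l₁ else 0)]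
        simp [ite_and, mul_comm]
    _ = (toMatrix x * toMatrix y) l.e l.f := by
        rw [sum_eq_sum_toMatrix]
        simp only [toMatrix_mul_left (fun f e => (if e = l.e then 1 else 0) * toMatrix y f l.f)]
        simp [Matrix.mul_apply, mul_comm]

theorem toMatrix_lmul (x y : Loop s t k → ℂ) : toMatrix (lmul x y) = toMatrix x * toMatrix y := by
  ext e f
  by_cases h : f.Parallel e
  · simpa using (toMatrix_apply_e_f (lmul x y) (ofPaths f e h)).trans (lmul_apply x y _)
  · rw [toMatrix_apply_of_not_parallel _ h, Matrix.mul_apply]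
    refine (Finset.sum_eq_zero fun m _ => ?_).symm
    by_cases hme : m.Parallel e
    · rw [toMatrix_apply_of_not_parallel y fun hfm => h (hfm.trans hme), mul_zero]
    · rw [toMatrix_apply_of_not_parallel x hme, zero_mul]

end Loop

theorem jonesKey_eq_iff {f e : GPath s t (k + 2)} (hf : f.EndsWithBacktrack)
    (he : e.EndsWithBacktrack) :
    jonesKey f = jonesKey e ↔ f.Parallel e ∧
      ∀ i : Fin k, f.edges (Fin.castLE (by omega) i) = e.edges (Fin.castLE (by omega) i) := by
  simp only [jonesKey, Prod.mk.injEq, funext_iff, GPath.Parallel, GPath.endV_eq_attachV,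
    GPath.EndsWithBacktrack] at hf he ⊢
  rw [← hf, ← he]
  tauto

theorem toMatrix_jonesE [Fintype Γa] [Fintype E] (γ : ℝ) (η : Γa ⊕ Γb → ℝ) :
    Loop.toMatrix (jonesE s t γ η k) =
      Matrix.blockOuter jonesKey (γ : ℂ) fun p => (jonesWeight η p : ℂ) := by
  ext e f
  simp only [Matrix.blockOuter, Matrix.of_apply]
  by_cases hd : f.EndsWithBacktrack ∧ e.EndsWithBacktrack
  · simp only [eq_comm (a := jonesKey e), jonesKey_eq_iff hd.1 hd.2]
    by_cases h : f.Parallel e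
    · simp only [GPath.EndsWithBacktrack] at hd
      simp [Loop.toMatrix, h, jonesE, jonesWeight, GPath.EndsWithBacktrack, hd]
    · rw [Loop.toMatrix_apply_of_not_parallel _ h, if_neg fun h' => h h'.1]
  · have hzero : (jonesWeight η e : ℂ) * jonesWeight η f = 0 := by
      rcases not_and_or.mp hd with hf | he
      · simp [jonesWeight, hf]
      · simp [jonesWeight, he]
    by_cases h : f.Parallel e
    · simp only [GPath.EndsWithBacktrack] at hd
      simp [Loop.toMatrix, h, jonesE, mul_assoc, hzero]
      tauto
    · simp [Loop.toMatrix_apply_of_not_parallel _ h, mul_assoc, hzero]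

theorem jones_element_selfadjoint_idempotent_general
    {Γa Γb E : Type*} [Fintype Γa] [Fintype E]
    (s : E → Γa) (t : E → Γb) (γ : ℝ) (hγ : 0 < γ)
    (η : Γa ⊕ Γb → ℝ) (hη : ∀ x, 0 < η x)
    (heig₁ : ∀ va : Γa,
      (∑ g : E, if s g = va then η (Sum.inr (t g)) else 0) = γ * η (Sum.inl va))
    (heig₂ : ∀ vb : Γb,
      (∑ g : E, if t g = vb then η (Sum.inl (s g)) else 0) = γ * η (Sum.inr vb))
    (k : ℕ) :
    lmul (jonesE s t γ η k) (jonesE s t γ η k) = jonesE s t γ η k ∧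
    starP (jonesE s t γ η k) = jonesE s t γ η k := by
  constructor
  · apply Loop.toMatrix_injective
    rw [Loop.toMatrix_lmul, toMatrix_jonesE, Matrix.blockOuter_mul_self (mod_cast hγ.ne')]
    intro p
    exact_mod_cast sum_sq_jonesWeight hη heig₁ heig₂ p
  · apply Loop.toMatrix_injective
    rw [Loop.toMatrix_starP, toMatrix_jonesE,
      Matrix.conjTranspose_blockOuter (Complex.conj_ofReal γ) fun p => Complex.conj_ofReal _]

/-- If `η` is a strictly positive `γ`-eigenvector of the adjacency matrix
of the bipartite graph (`γ > 0`), then for every `k ≥ 0` the Jones projection element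
`e_k ∈ P_{k+2}` is a self-adjoint idempotent: `e_k² = e_k` and `e_k* = e_k`. -/
theorem jones_element_selfadjoint_idempotent
    {Γa Γb E : Type*} [Fintype Γa] [Fintype Γb] [Fintype E]
    (s : E → Γa) (t : E → Γb) (γ : ℝ) (hγ : 0 < γ)
    (η : Γa ⊕ Γb → ℝ) (hη : ∀ x, 0 < η x)
    (heig₁ : ∀ va : Γa,
      (∑ g : E, if s g = va then η (Sum.inr (t g)) else 0) = γ * η (Sum.inl va))
    (heig₂ : ∀ vb : Γb,
      (∑ g : E, if t g = vb then η (Sum.inl (s g)) else 0) = γ * η (Sum.inr vb))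
    (k : ℕ) :
    lmul (jonesE s t γ η k) (jonesE s t γ η k) = jonesE s t γ η k ∧
    starP (jonesE s t γ η k) = jonesE s t γ η k :=
  jones_element_selfadjoint_idempotent_general s t γ hγ η hη heig₁ heig₂ k

end
end
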